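/- Let H̄ be a symmetric p×p real matrix, let w and c be nonzero reals, let δG be a nonzero vector in R^p and Δ⁻¹ a nonzero vector in R^p. Define the per-iteration Hessian estimate Ĥ = (1/2)[ (δG/(2c)) (Δ⁻¹)ᵀ + Δ⁻¹ (δG/(2c))ᵀ ]. Set t = 1 − w, b = w/(4c), u = δG, v = Δ⁻¹, and ũ = sqrt(‖v‖/(2‖u‖)) (u + (‖u‖/‖v‖) v), ṽ = sqrt(‖v‖/(2‖u‖)) (u − (‖u‖/‖v‖) v). Then (1 − w) H̄ + w Ĥ = t H̄ + b ũ ũᵀ − b ṽ ṽᵀ; that is, the 2SG averaging recursion equals two sequential rank-one modifications of H̄. -/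

import Mathlib

open Matrix

/-!
Both sides share the term `(1 - w) • H̄`, and `w • Ĥ = (w / (4c)) • (u vᵀ + v uᵀ)`. By
polarization, `(u + r v)(u + r v)ᵀ - (u - r v)(u - r v)ᵀ = 2r (u vᵀ + v uᵀ)`, and the scaling
`√(‖v‖ / (2‖u‖))` of `ũ` and `ṽ` is exactly the one that cancels the factor `2r` for
`r = ‖u‖ / ‖v‖`.
-/

/-- The Euclidean norm on `ℝ^p` (vectors identified with `Fin p → ℝ`). -/
noncomputable def euclNorm {p : ℕ} (x : Fin p → ℝ) : ℝ := Real.sqrt (∑ i, x i ^ 2)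

lemma euclNorm_eq_norm_toLp {p : ℕ} (x : Fin p → ℝ) :
    euclNorm x = ‖(WithLp.toLp 2 x : EuclideanSpace ℝ (Fin p))‖ := by
  simp [euclNorm, EuclideanSpace.norm_eq]

lemma euclNorm_pos {p : ℕ} {x : Fin p → ℝ} (hx : x ≠ 0) : 0 < euclNorm x := by
  rw [euclNorm_eq_norm_toLp, norm_pos_iff]
  simpa using hx

lemma vecMulVec_add_smul_sub_vecMulVec_sub_smul {m R : Type*} [CommRing R]
    (u v : m → R) (r : R) :
    vecMulVec (u + r • v) (u + r • v) - vecMulVec (u - r • v) (u - r • v) =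
      (2 * r) • (vecMulVec u v + vecMulVec v u) := by
  ext i j
  simp only [Matrix.sub_apply, Matrix.add_apply, Matrix.smul_apply, vecMulVec_apply, Pi.add_apply, Pi.sub_apply,
    Pi.smul_apply, smul_eq_mul]
  ring

lemma vecMulVec_smul_smul {m R : Type*} [CommRing R] (s : R) (x y : m → R) :
    vecMulVec (s • x) (s • y) = (s * s) • vecMulVec x y := by
  rw [smul_vecMulVec, vecMulVec_smul, smul_smul]

lemma sqrt_div_two_mul_self_mul_two_mul_div {a b : ℝ} (ha : 0 < a) (hb : 0 < b) :
    √(a / (2 * b)) * √(a / (2 * b)) * (2 * (b / a)) = 1 := by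
  rw [Real.mul_self_sqrt (by positivity)]
  field_simp

theorem stmt2_general {p : ℕ} (H : Matrix (Fin p) (Fin p) ℝ)
    (w c : ℝ)
    (δG Δinv : Fin p → ℝ) (hδG : δG ≠ 0) (hΔ : Δinv ≠ 0) :
    let Hhat : Matrix (Fin p) (Fin p) ℝ :=
      (1 / 2 : ℝ) • (vecMulVec ((2 * c)⁻¹ • δG) Δinv + vecMulVec Δinv ((2 * c)⁻¹ • δG))
    let t : ℝ := 1 - w
    let b : ℝ := w / (4 * c)
    let u : Fin p → ℝ := δG
    let v : Fin p → ℝ := Δinv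
    let ut : Fin p → ℝ :=
      Real.sqrt (euclNorm v / (2 * euclNorm u)) • (u + (euclNorm u / euclNorm v) • v)
    let vt : Fin p → ℝ :=
      Real.sqrt (euclNorm v / (2 * euclNorm u)) • (u - (euclNorm u / euclNorm v) • v)
    (1 - w) • H + w • Hhat = t • H + b • vecMulVec ut ut - b • vecMulVec vt vt := by
  intro Hhat t b u v ut vt
  set s := √(euclNorm v / (2 * euclNorm u))
  set r := euclNorm u / euclNorm v
  have hsr : s * s * (2 * r) = 1 :=
    sqrt_div_two_mul_self_mul_two_mul_div (euclNorm_pos hΔ) (euclNorm_pos hδG)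
  have hHhat : Hhat = (4 * c)⁻¹ • (vecMulVec u v + vecMulVec v u) := by
    simp only [Hhat, smul_vecMulVec, vecMulVec_smul, ← smul_add, smul_smul]
    congr 1
    ring
  have hrank : vecMulVec ut ut - vecMulVec vt vt = vecMulVec u v + vecMulVec v u := by
    rw [vecMulVec_smul_smul, vecMulVec_smul_smul, ← smul_sub,
      vecMulVec_add_smul_sub_vecMulVec_sub_smul, smul_smul, hsr, one_smul]
  rw [add_sub_assoc, ← smul_sub, hrank, hHhat, smul_smul]
  simp only [t, b, div_eq_mul_inv]

/-- The 2SG averaging recursion `(1−w) H̄ + w Ĥ` equals the two sequential rank-one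
modifications `t H̄ + b ũ ũᵀ − b ṽ ṽᵀ`, where `Ĥ` is the per-iteration Hessian estimate
built from the gradient difference `δG`, with `t = 1 − w`, `b = w/(4c)`, `u = δG`, `v = Δ⁻¹`. -/
theorem stmt2 {p : ℕ} (H : Matrix (Fin p) (Fin p) ℝ) (hH : H.IsSymm)
    (w c : ℝ) (hw : w ≠ 0) (hc : c ≠ 0)
    (δG Δinv : Fin p → ℝ) (hδG : δG ≠ 0) (hΔ : Δinv ≠ 0) :
    let Hhat : Matrix (Fin p) (Fin p) ℝ :=
      (1 / 2 : ℝ) • (vecMulVec ((2 * c)⁻¹ • δG) Δinv + vecMulVec Δinv ((2 * c)⁻¹ • δG))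
    let t : ℝ := 1 - w
    let b : ℝ := w / (4 * c)
    let u : Fin p → ℝ := δG
    let v : Fin p → ℝ := Δinv
    let ut : Fin p → ℝ :=
      Real.sqrt (euclNorm v / (2 * euclNorm u)) • (u + (euclNorm u / euclNorm v) • v)
    let vt : Fin p → ℝ :=
      Real.sqrt (euclNorm v / (2 * euclNorm u)) • (u - (euclNorm u / euclNorm v) • v)
    (1 - w) • H + w • Hhat = t • H + b • vecMulVec ut ut - b • vecMulVec vt vt :=
  stmt2_general H w c δG Δinv hδG hΔ
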